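/- arXiv:1406.4481 — 3 statements merged into one kernel-verified Lean document; each statement's English description precedes it below -/
import Mathlib

section
/- If a is coprime to N, r is the multiplicative order of a modulo N, r is even, and a^(r/2) ≢ -1 (mod N), then at least one of gcd(a^(r/2) - 1, N) and gcd(a^(r/2) + 1, N) is a nontrivial factor of N. -/
/-!
Put `x = a ^ (r / 2)`. Since `x ^ 2 = a ^ r ≡ 1`, `N` divides `(x - 1) (x + 1)`, while it divides
neither factor: `x ≢ 1` because `r / 2` is a positive exponent below the order, and `x ≢ -1` by
hypothesis. Hence `gcd (x - 1, N)` is neither `1` (else `N ∣ x + 1`) nor `N` (else `N ∣ x - 1`).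
-/

theorem Int.one_lt_gcd_lt_of_dvd_mul {n : ℕ} {x y : ℤ} (h : (n : ℤ) ∣ x * y)
    (hx : ¬ (n : ℤ) ∣ x) (hy : ¬ (n : ℤ) ∣ y) : 1 < Int.gcd x n ∧ Int.gcd x n < n := by
  have hn : n ≠ 0 := by
    rintro rfl
    rcases mul_eq_zero.mp (zero_dvd_iff.mp h) with rfl | rfl <;> simp_all
  have hgcd_dvd : Int.gcd x n ∣ n := by simpa using Int.gcd_dvd_natAbs_right x n
  have hgcd_ne_one : Int.gcd x n ≠ 1 := fun h1 =>
    hy ((Int.isCoprime_iff_gcd_eq_one.mpr h1).symm.dvd_of_dvd_mul_left h)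
  have hgcd_ne_n : Int.gcd x n ≠ n := fun hN => hx (hN ▸ Int.gcd_dvd_left x n)
  have hgcd_pos : 0 < Int.gcd x n := Nat.pos_of_dvd_of_pos hgcd_dvd (Nat.pos_of_ne_zero hn)
  have hgcd_le : Int.gcd x n ≤ n := Nat.le_of_dvd (Nat.pos_of_ne_zero hn) hgcd_dvd
  omega

section OrderOf

variable {G : Type*} [Monoid G] {g : G}

theorem pow_half_orderOf_sq (h : Even (orderOf g)) : (g ^ (orderOf g / 2)) ^ 2 = 1 := by
  rw [← pow_mul, Nat.div_mul_cancel h.two_dvd, pow_orderOf_eq_one]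

theorem pow_half_orderOf_ne_one (hpos : 0 < orderOf g) (h : Even (orderOf g)) :
    g ^ (orderOf g / 2) ≠ 1 := by
  obtain ⟨k, hk⟩ := h
  exact pow_ne_one_of_lt_orderOf (by omega) (by omega)

end OrderOf

theorem ZMod.orderOf_intCast_pos {N : ℕ} [NeZero N] {a : ℤ} (hcop : IsCoprime a (N : ℤ)) :
    0 < orderOf (a : ZMod N) :=
  orderOf_pos_iff.mpr (ZMod.unitOfIsCoprime a hcop).isUnit.isOfFinOrder

theorem shor_even_order_gives_factor_general (N : ℕ) (hN : 1 < N) (a : ℤ) (hcop : IsCoprime a (N : ℤ))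
    (r : ℕ) (hr : r = orderOf (a : ZMod N)) (hreven : Even r)
    (hroot : (a : ZMod N) ^ (r / 2) ≠ -1) :
    (Int.gcd (a ^ (r / 2) - 1) N ∣ N ∧ 1 < Int.gcd (a ^ (r / 2) - 1) N ∧
      Int.gcd (a ^ (r / 2) - 1) N < N) ∨
    (Int.gcd (a ^ (r / 2) + 1) N ∣ N ∧ 1 < Int.gcd (a ^ (r / 2) + 1) N ∧
      Int.gcd (a ^ (r / 2) + 1) N < N) := by
  have : NeZero N := ⟨by omega⟩
  subst hr
  set x : ℤ := a ^ (orderOf (a : ZMod N) / 2) with hx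
  have hxN : (x : ZMod N) = (a : ZMod N) ^ (orderOf (a : ZMod N) / 2) := by push_cast [hx]; rfl
  have hsq : (x : ZMod N) ^ 2 = 1 := hxN ▸ pow_half_orderOf_sq hreven
  have hdvd : (N : ℤ) ∣ (x - 1) * (x + 1) := by
    rw [← ZMod.intCast_zmod_eq_zero_iff_dvd]
    push_cast
    linear_combination hsq
  have hx_sub : ¬ (N : ℤ) ∣ x - 1 := by
    rw [← ZMod.intCast_zmod_eq_zero_iff_dvd, Int.cast_sub, Int.cast_one, sub_eq_zero, hxN]
    exact pow_half_orderOf_ne_one (ZMod.orderOf_intCast_pos hcop) hreven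
  have hx_add : ¬ (N : ℤ) ∣ x + 1 := by
    rwa [← ZMod.intCast_zmod_eq_zero_iff_dvd, Int.cast_add, Int.cast_one, add_eq_zero_iff_eq_neg,
      hxN]
  exact Or.inl ⟨by simpa using Int.gcd_dvd_natAbs_right (x - 1) N,
    Int.one_lt_gcd_lt_of_dvd_mul hdvd hx_sub hx_add⟩

theorem shor_even_order_gives_factor (N : ℕ) (hN : 1 < N) (hodd : Odd N)
    (hcomp : ¬ N.Prime) (a : ℤ) (hcop : IsCoprime a (N : ℤ))
    (r : ℕ) (hr : r = orderOf (a : ZMod N)) (hreven : Even r)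
    (hroot : (a : ZMod N) ^ (r / 2) ≠ -1) :
    (Int.gcd (a ^ (r / 2) - 1) N ∣ N ∧ 1 < Int.gcd (a ^ (r / 2) - 1) N ∧
      Int.gcd (a ^ (r / 2) - 1) N < N) ∨
    (Int.gcd (a ^ (r / 2) + 1) N ∣ N ∧ 1 < Int.gcd (a ^ (r / 2) + 1) N ∧
      Int.gcd (a ^ (r / 2) + 1) N < N) :=
  shor_even_order_gives_factor_general N hN a hcop r hr hreven hroot
end

section
/- Let N be odd with prime factorization N = p₁^α₁ ⋯ p_m^α_m (m distinct odd primes, m ≥ 2). The probability that a uniformly random a coprime to N, 1 ≤ a ≤ N-1, has order r modulo N that is even and satisfies a^(r/2) ≢ -1 (mod N), is at least 1 - 1/2^(m-1). -/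
/-!
By the Chinese remainder theorem `(ZMod N)ˣ ≃* Πᵢ (ZMod (pᵢ ^ αᵢ))ˣ`, a product of cyclic
groups of even order. If `a` is bad (its order `r` is odd, or `a ^ (r / 2) = -1`), then every
component `aᵢ` has an order with the same 2-adic valuation as `r`: otherwise the order of `aᵢ`
divides `r / 2`, so `aᵢ ^ (r / 2) = 1 ≠ -1`. In a cyclic group of even order at most half of the
elements have an order of any prescribed 2-adic valuation, so once the first component is chosen,
each of the remaining `m - 1` components matches its valuation with probability at most `1 / 2`.
-/

open Finset

namespace Nat

lemma mul_dvd_of_factorization_lt {p d r : ℕ} (hp : p.Prime) (hd : d ≠ 0) (hr : r ≠ 0)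
    (hdr : d ∣ r) (h : d.factorization p < r.factorization p) : p * d ∣ r := by
  have hpow : p ^ (d.factorization p + 1) ∣ r := (hp.pow_dvd_iff_le_factorization hr).mpr h
  have hcompl : ordCompl[p] d ∣ r := (Nat.div_dvd_of_dvd (ordProj_dvd d p)).trans hdr
  have hcop : Coprime (p ^ (d.factorization p + 1)) (ordCompl[p] d) :=
    (coprime_ordCompl hp hd).pow_left _
  calc p * d = p ^ (d.factorization p + 1) * ordCompl[p] d := by
        conv_lhs => rw [← ordProj_mul_ordCompl_eq_self d p]
        ring
    _ ∣ r := hcop.mul_dvd_of_dvd_of_dvd hpow hcompl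

end Nat

section OrderTwoAdic

lemma factorization_two_orderOf_map_eq {G H : Type*} [Monoid G] [Monoid H] (f : G →* H) {x : G}
    (hx : IsOfFinOrder x) (h : Even (orderOf x) → f x ^ (orderOf x / 2) ≠ 1) :
    (orderOf (f x)).factorization 2 = (orderOf x).factorization 2 := by
  have hr : orderOf x ≠ 0 := hx.orderOf_pos.ne'
  have hdr : orderOf (f x) ∣ orderOf x := orderOf_map_dvd f x
  have hd : orderOf (f x) ≠ 0 := (Nat.pos_of_dvd_of_pos hdr hx.orderOf_pos).ne'
  have hle := (Nat.factorization_le_iff_dvd hd hr).mpr hdr 2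
  by_cases heven : Even (orderOf x)
  · refine le_antisymm hle (not_lt.mp fun hlt => h heven ?_)
    rw [← orderOf_dvd_iff_pow_eq_one]
    exact Nat.dvd_div_of_mul_dvd (Nat.mul_dvd_of_factorization_lt Nat.prime_two hd hr hdr hlt)
  · have : (orderOf x).factorization 2 = 0 :=
      Nat.factorization_eq_zero_of_not_dvd (by rwa [← even_iff_two_dvd])
    omega

lemma pow_two_pow_mul_ordCompl_card_eq_one_iff {G : Type*} [Group G] [Fintype G] (x : G)
    (k : ℕ) :
    x ^ (2 ^ k * ordCompl[2] (Fintype.card G)) = 1 ↔ (orderOf x).factorization 2 ≤ k := by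
  have hu : ordCompl[2] (Fintype.card G) ≠ 0 := (Nat.ordCompl_pos 2 Fintype.card_ne_zero).ne'
  have hx : orderOf x ≠ 0 := (orderOf_pos x).ne'
  rw [← orderOf_dvd_iff_pow_eq_one]
  constructor
  · intro h
    have := (Nat.factorization_le_iff_dvd hx (by positivity)).mpr h 2
    rwa [Nat.factorization_mul (by positivity) hu, Nat.Prime.factorization_pow Nat.prime_two,
      Finsupp.add_apply, Nat.factorization_eq_zero_of_not_dvd (Nat.not_dvd_ordCompl Nat.prime_two
        Fintype.card_ne_zero), Finsupp.single_eq_same, add_zero] at this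
  · intro h
    rw [← Nat.ordProj_mul_ordCompl_eq_self (orderOf x) 2]
    exact mul_dvd_mul (pow_dvd_pow 2 h) (Nat.ordCompl_dvd_ordCompl_of_dvd orderOf_dvd_card 2)

variable {G : Type*} [CommGroup G] [Fintype G] [DecidableEq G]

lemma two_mul_card_filter_pow_eq_one_le {τ : G} {t : ℕ} (hτ : τ ^ t ≠ 1) :
    2 * #{x : G | x ^ t = 1} ≤ Fintype.card G := by
  set B := ({x : G | x ^ t = 1} : Finset G)
  have hdisj : Disjoint B (B.image (τ * ·)) := by
    rw [disjoint_right]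
    rintro _ hy hx
    obtain ⟨x, hxB, rfl⟩ := mem_image.mp hy
    simp only [B, mem_filter, mem_univ, true_and] at hx hxB
    rw [mul_pow, hxB, mul_one] at hx
    exact hτ hx
  calc 2 * #B = #(B ∪ B.image (τ * ·)) := by
        rw [card_union_of_disjoint hdisj, card_image_of_injective _ (mul_right_injective τ)]
        ring
    _ ≤ Fintype.card G := card_le_univ _

lemma card_filter_pow_two_mul_eq_one_le [IsCyclic G] (s : ℕ) :
    #{x : G | x ^ (2 * s) = 1} ≤ 2 * #{x : G | x ^ s = 1} := by
  set B := ({x : G | x ^ (2 * s) = 1} : Finset G)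
  have himage : B.image (· ^ 2) ⊆ ({x : G | x ^ s = 1} : Finset G) := by
    intro y hy
    obtain ⟨x, hx, rfl⟩ := mem_image.mp hy
    simp only [B, mem_filter, mem_univ, true_and] at hx ⊢
    rwa [← pow_mul]
  refine (card_le_mul_card_image B 2 ?_).trans (Nat.mul_le_mul_left 2 (card_le_card himage))
  rintro _ hy
  obtain ⟨x₀, -, rfl⟩ := mem_image.mp hy
  calc #{x ∈ B | x ^ 2 = x₀ ^ 2} ≤ #{y : G | y ^ 2 = 1} := by
        refine card_le_card_of_injOn (· * x₀⁻¹) (fun x hx => ?_) (fun x _ y _ h => ?_)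
        · simp only [mem_coe, mem_filter, mem_univ, true_and] at hx ⊢
          rw [mul_pow, hx.2, inv_pow, mul_inv_cancel]
        · exact mul_right_cancel h
    _ ≤ 2 := IsCyclic.card_pow_eq_one_le two_pos

lemma two_mul_card_filter_factorization_orderOf_eq_le [IsCyclic G]
    (heven : Even (Fintype.card G)) (k : ℕ) :
    2 * #{x : G | (orderOf x).factorization 2 = k} ≤ Fintype.card G := by
  set u := ordCompl[2] (Fintype.card G)
  have hB := pow_two_pow_mul_ordCompl_card_eq_one_iff (G := G)
  cases k with
  | zero =>
    obtain ⟨τ, hτ⟩ := exists_prime_orderOf_dvd_card (G := G) 2 heven.two_dvd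
    have hτu : τ ^ (2 ^ 0 * u) ≠ 1 := by
      rw [Ne, ← orderOf_dvd_iff_pow_eq_one, hτ, pow_zero, one_mul]
      exact Nat.not_dvd_ordCompl Nat.prime_two Fintype.card_ne_zero
    convert two_mul_card_filter_pow_eq_one_le hτu using 4 with x
    rw [hB, Nat.le_zero]
  | succ k =>
    have hsub : ({x : G | (orderOf x).factorization 2 = k + 1} : Finset G) ⊆
        ({x : G | x ^ (2 * (2 ^ k * u)) = 1} : Finset G) \
          ({x : G | x ^ (2 ^ k * u) = 1} : Finset G) := by
      intro x hx
      simp only [mem_sdiff, mem_filter, mem_univ, true_and] at hx ⊢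
      rw [← mul_assoc, ← pow_succ', hB, hB]
      omega
    have hmono : ({x : G | x ^ (2 ^ k * u) = 1} : Finset G) ⊆
        ({x : G | x ^ (2 * (2 ^ k * u)) = 1} : Finset G) := by
      intro x hx
      simp only [mem_filter, mem_univ, true_and] at hx ⊢
      rw [pow_mul', hx, one_pow]
    have hlevel := card_le_card hsub
    rw [card_sdiff_of_subset hmono] at hlevel
    have hsq := card_filter_pow_two_mul_eq_one_le (G := G) (2 ^ k * u)
    have huniv := card_filter_le (univ : Finset G) fun x : G => x ^ (2 * (2 ^ k * u)) = 1
    rw [card_univ] at huniv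
    omega

end OrderTwoAdic

lemma two_pow_mul_card_filter_forall_eq_le {ι : Type*} [Fintype ι] [DecidableEq ι]
    {X : ι → Type*} [∀ i, Fintype (X i)] {β : Type*} [DecidableEq β] (f : ∀ i, X i → β)
    (hf : ∀ i b, 2 * #{x : X i | f i x = b} ≤ Fintype.card (X i)) :
    2 ^ (Fintype.card ι - 1) * #{x : ∀ i, X i | ∀ i j, f i (x i) = f j (x j)} ≤
      Fintype.card (∀ i, X i) := by
  classical
  rcases isEmpty_or_nonempty ι with hι | ⟨⟨i₀⟩⟩
  · simp [Fintype.card_eq_zero]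
  set c : ∀ i, β → ℕ := fun i b => #{x : X i | f i x = b}
  have hsub : ({x : ∀ i, X i | ∀ i j, f i (x i) = f j (x j)} : Finset _) ⊆
      (univ.image (f i₀)).biUnion fun b => Fintype.piFinset fun i => {x : X i | f i x = b} := by
    intro x hx
    simp only [mem_filter, mem_univ, true_and] at hx
    simp only [mem_biUnion, mem_image, mem_univ, true_and, Fintype.mem_piFinset, mem_filter]
    exact ⟨_, ⟨x i₀, rfl⟩, fun i => hx i i₀⟩
  have hcard : #{x : ∀ i, X i | ∀ i j, f i (x i) = f j (x j)} ≤
      ∑ b ∈ univ.image (f i₀), ∏ i, c i b := by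
    refine (card_le_card hsub).trans (card_biUnion_le.trans_eq ?_)
    simp only [Fintype.card_piFinset, c]
  calc 2 ^ (Fintype.card ι - 1) * #{x : ∀ i, X i | ∀ i j, f i (x i) = f j (x j)}
      ≤ 2 ^ (Fintype.card ι - 1) * ∑ b ∈ univ.image (f i₀), ∏ i, c i b := by gcongr
    _ = ∑ b ∈ univ.image (f i₀), c i₀ b * ∏ i ∈ univ.erase i₀, 2 * c i b := by
        rw [mul_sum]
        refine sum_congr rfl fun b _ => ?_
        rw [prod_mul_distrib, prod_const, card_erase_of_mem (mem_univ i₀), card_univ,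
          ← mul_prod_erase univ (c · b) (mem_univ i₀)]
        ring
    _ ≤ ∑ b ∈ univ.image (f i₀), c i₀ b * ∏ i ∈ univ.erase i₀, Fintype.card (X i) := by
        gcongr with b _ i
        exact hf i b
    _ = Fintype.card (∀ i, X i) := by
        rw [← sum_mul, ← card_eq_sum_card_image, card_univ, mul_prod_erase univ
          (fun i => Fintype.card (X i)) (mem_univ i₀), Fintype.card_pi]

lemma one_sub_one_div_two_pow_le_card_div {α : Type*} [Finite α] [Nonempty α] (P : α → Prop)
    (k : ℕ) (h : 2 ^ k * Nat.card {x // ¬ P x} ≤ Nat.card α) :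
    1 - 1 / 2 ^ k ≤ (Nat.card {x // P x} : ℚ) / Nat.card α := by
  have := Fintype.ofFinite α
  classical
  have hsum : Nat.card {x // P x} + Nat.card {x // ¬ P x} = Nat.card α := by
    simp only [Nat.card_eq_fintype_card, Fintype.card_subtype_compl]
    have := Fintype.card_subtype_le P
    omega
  have hpos : (0 : ℚ) < Nat.card α := by exact_mod_cast Nat.card_pos
  have hbad : (Nat.card {x // ¬ P x} : ℚ) ≤ Nat.card α / 2 ^ k := by
    rw [le_div_iff₀ (by positivity), mul_comm]
    exact_mod_cast h
  have hsum' : (Nat.card {x // P x} : ℚ) + Nat.card {x // ¬ P x} = Nat.card α := by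
    exact_mod_cast hsum
  rw [le_div_iff₀ hpos, sub_mul, one_mul, one_div_mul_eq_div]
  linarith

namespace ZMod

noncomputable def unitsEquivPi {ι : Type*} [Fintype ι] (q : ι → ℕ)
    (hcop : Pairwise (Function.onFun Nat.Coprime q)) :
    (ZMod (∏ i, q i))ˣ ≃* ∀ i, (ZMod (q i))ˣ :=
  (Units.mapEquiv (prodEquivPi q hcop).toMulEquiv).trans MulEquiv.piUnits

@[simp]
lemma coe_unitsEquivPi_apply {ι : Type*} [Fintype ι] (q : ι → ℕ)
    (hcop : Pairwise (Function.onFun Nat.Coprime q)) (a : (ZMod (∏ i, q i))ˣ) (i : ι) :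
    (unitsEquivPi q hcop a i : ZMod (q i)) = (a : ZMod (∏ i, q i)).cast := by
  simp [unitsEquivPi]

lemma factorization_two_orderOf_unitsEquivPi_apply {ι : Type*} [Fintype ι] {q : ι → ℕ}
    (hq : ∀ i, 2 < q i) (hcop : Pairwise (Function.onFun Nat.Coprime q))
    {a : (ZMod (∏ i, q i))ˣ}
    (ha : Even (orderOf a) → (a : ZMod (∏ i, q i)) ^ (orderOf a / 2) = -1) (i : ι) :
    (orderOf (unitsEquivPi q hcop a i)).factorization 2 = (orderOf a).factorization 2 := by
  have : NeZero (∏ i, q i) := ⟨prod_ne_zero_iff.mpr fun i _ => by have := hq i; omega⟩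
  have : Fact (2 < q i) := ⟨hq i⟩
  refine factorization_two_orderOf_map_eq
    ((Pi.evalMonoidHom _ i).comp (unitsEquivPi q hcop).toMonoidHom) (isOfFinOrder_of_finite a)
    fun heven h => neg_one_ne_one (n := q i) ?_
  have hone := congrArg (fun u : (ZMod (q i))ˣ => (u : ZMod (q i))) h
  have hneg := congrArg (castHom (dvd_prod_of_mem q (mem_univ i)) (ZMod (q i))) (ha heven)
  simp only [MonoidHom.coe_comp, Function.comp_apply, Pi.evalMonoidHom_apply,
    MulEquiv.coe_toMonoidHom, Units.val_pow_eq_pow_val, coe_unitsEquivPi_apply,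
    Units.val_one] at hone
  simp only [map_pow, map_neg, map_one, castHom_apply] at hneg
  rwa [← hneg]

lemma two_mul_card_filter_factorization_orderOf_units_eq_le {p n : ℕ} [NeZero (p ^ n)]
    (hp : p.Prime) (hp2 : p ≠ 2) (hn : n ≠ 0) (k : ℕ) :
    2 * #{x : (ZMod (p ^ n))ˣ | (orderOf x).factorization 2 = k} ≤
      Fintype.card (ZMod (p ^ n))ˣ := by
  have := isCyclic_units_of_prime_pow p hp hp2 n
  refine two_mul_card_filter_factorization_orderOf_eq_le ?_ k
  rw [card_units_eq_totient]
  exact Nat.totient_even ((hp.two_le.lt_of_ne hp2.symm).trans_le (Nat.le_self_pow hn p))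

end ZMod

theorem shor_good_a_probability_general (m : ℕ)
    (p : Fin m → ℕ) (α : Fin m → ℕ)
    (hp : ∀ i, (p i).Prime) (hodd : ∀ i, Odd (p i)) (hα : ∀ i, 1 ≤ α i)
    (hinj : Function.Injective p)
    (N : ℕ) (hN : N = ∏ i, p i ^ α i) :
    ((Nat.card {a : (ZMod N)ˣ //
        Even (orderOf a) ∧ ((a : ZMod N)) ^ (orderOf a / 2) ≠ -1} : ℚ)
      / (Nat.card (ZMod N)ˣ : ℚ)) ≥ 1 - 1 / 2 ^ (m - 1) := by
  subst hN
  have hp2 : ∀ i, p i ≠ 2 := fun i h => Nat.not_even_iff_odd.mpr (hodd i) (h ▸ even_two)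
  have hα0 : ∀ i, α i ≠ 0 := fun i => Nat.one_le_iff_ne_zero.mp (hα i)
  have hq : ∀ i, 2 < p i ^ α i := fun i =>
    ((hp i).two_le.lt_of_ne (hp2 i).symm).trans_le (Nat.le_self_pow (hα0 i) _)
  have : NeZero (∏ i, p i ^ α i) := ⟨prod_ne_zero_iff.mpr fun i _ => by have := hq i; omega⟩
  have : ∀ i, NeZero (p i ^ α i) := fun i => ⟨by have := hq i; omega⟩
  have hcop : Pairwise (Function.onFun Nat.Coprime fun i => p i ^ α i) := fun i j hij =>
    Nat.Coprime.pow _ _ ((Nat.coprime_primes (hp i) (hp j)).mpr (hinj.ne hij))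
  set e := ZMod.unitsEquivPi _ hcop
  refine one_sub_one_div_two_pow_le_card_div _ _ ?_
  rw [Nat.card_congr e.toEquiv, Nat.card_eq_fintype_card, Nat.card_eq_fintype_card,
    Fintype.card_subtype]
  refine le_trans ?_ (two_pow_mul_card_filter_forall_eq_le _ fun i =>
    ZMod.two_mul_card_filter_factorization_orderOf_units_eq_le (hp i) (hp2 i) (hα0 i))
  rw [Fintype.card_fin]
  gcongr
  refine card_le_card_of_injOn e (fun a ha => ?_) e.injective.injOn
  simp only [coe_filter, mem_univ, true_and, Set.mem_ofPred_eq, not_and_not_right] at ha ⊢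
  intro i j
  rw [ZMod.factorization_two_orderOf_unitsEquivPi_apply hq hcop ha,
    ZMod.factorization_two_orderOf_unitsEquivPi_apply hq hcop ha]

theorem shor_good_a_probability (m : ℕ) (hm : 2 ≤ m)
    (p : Fin m → ℕ) (α : Fin m → ℕ)
    (hp : ∀ i, (p i).Prime) (hodd : ∀ i, Odd (p i)) (hα : ∀ i, 1 ≤ α i)
    (hinj : Function.Injective p)
    (N : ℕ) (hN : N = ∏ i, p i ^ α i) :
    ((Nat.card {a : (ZMod N)ˣ //
        Even (orderOf a) ∧ ((a : ZMod N)) ^ (orderOf a / 2) ≠ -1} : ℚ)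
      / (Nat.card (ZMod N)ˣ : ℚ)) ≥ 1 - 1 / 2 ^ (m - 1) :=
  shor_good_a_probability_general m p α hp hodd hα hinj N hN
end

section
/- One Grover iteration preserves the two-dimensional real span of the marked state and the uniform superposition: writing the state as sin θ |x₀⟩ + cos θ |rest⟩ with |rest⟩ the uniform superposition of unmarked states, applying the phase flip Iₓ₀ = I - 2|x₀⟩⟨x₀| followed by D = 2|ψ⟩⟨ψ| - I yields sin(θ + 2θ₀)|x₀⟩ + cos(θ + 2θ₀)|rest⟩, where sin θ₀ = 1/√N. -/
open Matrix Real

theorem grover_iteration_rotation (N : ℕ) (hN : 2 ≤ N) (x₀ : Fin N)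
    (θ θ₀ : ℝ) (hθ₀ : Real.sin θ₀ = 1 / Real.sqrt N)
    (hθ₀' : θ₀ ∈ Set.Ioo 0 (Real.pi / 2)) :
    let e : Fin N → ℝ := Pi.single x₀ 1
    let rest : Fin N → ℝ := fun x => if x = x₀ then 0 else 1 / Real.sqrt (N - 1)
    let Ix₀ : Matrix (Fin N) (Fin N) ℝ :=
      1 - 2 • Matrix.of (fun i j => if i = x₀ ∧ j = x₀ then (1 : ℝ) else 0)
    let D : Matrix (Fin N) (Fin N) ℝ :=
      Matrix.of fun x y => 2 / (N : ℝ) - if x = y then 1 else 0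
    D *ᵥ (Ix₀ *ᵥ (Real.sin θ • e + Real.cos θ • rest)) =
      Real.sin (θ + 2 * θ₀) • e + Real.cos (θ + 2 * θ₀) • rest := by
  intro e rest Ix₀ D
  have hN2 : (2:ℝ) ≤ (N:ℝ) := by exact_mod_cast hN
  have hNpos : (0:ℝ) < N := by linarith
  set s := Real.sqrt N with hs
  set t := Real.sqrt ((N:ℝ) - 1) with ht
  have hspos : 0 < s := Real.sqrt_pos.2 hNpos
  have htpos : 0 < t := Real.sqrt_pos.2 (by linarith)
  have hs2 : s^2 = N := Real.sq_sqrt hNpos.le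
  have ht2 : t^2 = (N:ℝ) - 1 := Real.sq_sqrt (by linarith)
  have hcos : Real.cos θ₀ = t / s := by
    have hc : 0 ≤ Real.cos θ₀ :=
      Real.cos_nonneg_of_mem_Icc ⟨by linarith [hθ₀'.1, Real.pi_pos], hθ₀'.2.le⟩
    have hsq : Real.cos θ₀ ^ 2 = (t/s)^2 := by
      have h1 := Real.sin_sq_add_cos_sq θ₀
      rw [hθ₀] at h1
      have h2 : (t/s)^2 = ((N:ℝ)-1)/(N:ℝ) := by rw [div_pow, hs2, ht2]
      rw [h2]
      field_simp at h1 ⊢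
      nlinarith [h1, hs2]
    calc Real.cos θ₀ = Real.sqrt (Real.cos θ₀ ^ 2) := (Real.sqrt_sq hc).symm
      _ = Real.sqrt ((t/s)^2) := by rw [hsq]
      _ = t/s := Real.sqrt_sq (by positivity)
  have hsin2 : Real.sin (2*θ₀) = 2*t/(N:ℝ) := by
    rw [Real.sin_two_mul, hθ₀, hcos]
    field_simp
    nlinarith [hs2]
  have hcos2 : Real.cos (2*θ₀) = 1 - 2/(N:ℝ) := by
    rw [Real.cos_two_mul', hθ₀, hcos]
    rw [div_pow, div_pow, ht2, hs2]
    field_simp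
    ring
  have hv : ∀ j, (Real.sin θ • e + Real.cos θ • rest) j =
      if j = x₀ then Real.sin θ else Real.cos θ / t := by
    intro j
    simp only [Pi.add_apply, Pi.smul_apply, smul_eq_mul, e, rest, Pi.single_apply]
    rw [ht]
    split_ifs with h <;> ring
  have hentry : ∀ i j, Ix₀ i j =
      (if i = j then (1:ℝ) else 0) - 2*(if i = x₀ ∧ j = x₀ then 1 else 0) := by
    intro i j
    simp [Ix₀, Matrix.one_apply]
  have hIv : Ix₀ *ᵥ (Real.sin θ • e + Real.cos θ • rest) =
      fun y => if y = x₀ then -Real.sin θ else Real.cos θ / t := by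
    funext i
    show ∑ j, Ix₀ i j * (Real.sin θ • e + Real.cos θ • rest) j = _
    by_cases hi : i = x₀
    · have h1 : ∀ j ∈ Finset.univ, Ix₀ i j * (Real.sin θ • e + Real.cos θ • rest) j =
          if j = x₀ then -Real.sin θ else 0 := by
        intro j _
        rw [hentry, hv, hi]
        by_cases hj : j = x₀
        · simp [hj]; ring
        · simp [hj, Ne.symm hj]
      rw [Finset.sum_congr rfl h1, Finset.sum_ite_eq' Finset.univ x₀ (fun _ => -Real.sin θ)]
      simp [hi]
    · have h1 : ∀ j ∈ Finset.univ, Ix₀ i j * (Real.sin θ • e + Real.cos θ • rest) j =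
          if j = i then Real.cos θ / t else 0 := by
        intro j _
        rw [hentry, hv]
        by_cases hj : j = i
        · subst hj; simp [hi]
        · have hij : ¬ i = j := fun h => hj h.symm
          simp [hi, hij, hj]
      rw [Finset.sum_congr rfl h1, Finset.sum_ite_eq' Finset.univ i (fun _ => Real.cos θ / t)]
      simp [hi]
  have hD : ∀ w : Fin N → ℝ, D *ᵥ w = fun x => (2/(N:ℝ)) * (∑ y, w y) - w x := by
    intro w
    funext x
    show ∑ y, (2 / (N : ℝ) - if x = y then 1 else 0) * w y = _
    simp only [sub_mul, ite_mul, one_mul, zero_mul, Finset.sum_sub_distrib,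
      Finset.sum_ite_eq, Finset.mem_univ, if_true, Finset.mul_sum]
  have key : ∀ a b : ℝ, ∑ y : Fin N, (if y = x₀ then a else b) = a - b + N * b := by
    intro a b
    have h1 : ∀ y : Fin N, (if y = x₀ then a else b) = (if y = x₀ then a - b else 0) + b := by
      intro y; split_ifs <;> ring
    simp [h1, Finset.sum_add_distrib, Finset.sum_ite_eq', Finset.card_univ, mul_comm]
  rw [hIv, hD]
  funext x
  simp only [Pi.add_apply, Pi.smul_apply, smul_eq_mul, e, rest, Pi.single_apply, key,
    Real.sin_add, Real.cos_add, hsin2, hcos2]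
  rw [← ht]
  have hNt : (N:ℝ) = t^2 + 1 := by linarith [ht2]
  rw [hNt]
  by_cases hx : x = x₀ <;> simp only [hx, if_true, if_false] <;> field_simp <;> ring
end
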